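/- For n = 2 and every λ > 0 and every symmetric 2×2 matrix τ, one has H⁽²⁾(τ) ≤ h_λ(τ), where h_λ is the quasiconvexification of the two-well integrand: h_λ(τ) = λ^{-1/2}|τ|² + λ^{1/2} if ρ⁽²⁾(τ) ≥ √λ, and h_λ(τ) = 2(ρ⁽²⁾(τ) − λ^{-1/2}|det τ|) otherwise. -/

import Mathlib

noncomputable def frob {n : ℕ} (τ : Matrix (Fin n) (Fin n) ℝ) : ℝ :=
  Real.sqrt (∑ i, ∑ j, (τ i j) ^ 2)

/-- `ρ⁽²⁾(τ) = |τ₁| + |τ₂|`, the sum of absolute values of eigenvalues. -/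
noncomputable def rho2 (τ : Matrix (Fin 2) (Fin 2) ℝ) : ℝ :=
  if h : τ.IsHermitian then |h.eigenvalues 0| + |h.eigenvalues 1| else 0

/-- `H⁽²⁾(τ) = 2|τ₂|`, twice the largest absolute eigenvalue. -/
noncomputable def H2 (τ : Matrix (Fin 2) (Fin 2) ℝ) : ℝ :=
  if h : τ.IsHermitian then 2 * max |h.eigenvalues 0| |h.eigenvalues 1| else 0

/-- the quasiconvexified integrand `h_λ` for `n = 2`. -/
noncomputable def hlam (lam : ℝ) (τ : Matrix (Fin 2) (Fin 2) ℝ) : ℝ :=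
  if Real.sqrt lam ≤ rho2 τ then (frob τ) ^ 2 / Real.sqrt lam + Real.sqrt lam
  else 2 * (rho2 τ - |τ.det| / Real.sqrt lam)

/-!
Write `a = |τ₁|`, `b = |τ₂|`, `s = √λ`. The spectral theorem gives `|τ|² = a² + b²` and
`|det τ| = a b`. When `a + b ≥ s`, the bound `2 max a b ≤ (a² + b²)/s + s` is AM–GM for
`max a b` and `s`; when `a + b < s`, both `a, b ≤ s`, so `a b / s ≤ min a b`, which gives
`2 max a b ≤ 2 (a + b - a b / s)`.
-/

namespace Matrix.IsHermitian

variable {n : Type*} [Fintype n] [DecidableEq n] {A : Matrix n n ℝ}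

lemma trace_mul_self_eq_sum_sq_eigenvalues (hA : A.IsHermitian) :
    (A * A).trace = ∑ i, hA.eigenvalues i ^ 2 := by
  conv_lhs => rw [hA.spectral_theorem, ← map_mul, Unitary.conjStarAlgAut_apply, trace_mul_cycle,
    Unitary.coe_star_mul_self, one_mul, diagonal_mul_diagonal, trace_diagonal]
  simp [sq]

lemma sum_sq_apply_eq_sum_sq_eigenvalues (hA : A.IsHermitian) :
    ∑ i, ∑ j, A i j ^ 2 = ∑ i, hA.eigenvalues i ^ 2 := by
  rw [← hA.trace_mul_self_eq_sum_sq_eigenvalues, trace]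
  refine Finset.sum_congr rfl fun i _ => ?_
  rw [diag_apply, mul_apply]
  refine Finset.sum_congr rfl fun j _ => ?_
  rw [sq, ← star_trivial (A j i), hA.apply i j]

end Matrix.IsHermitian

lemma frob_sq_eq_sum_sq_eigenvalues {n : ℕ} {τ : Matrix (Fin n) (Fin n) ℝ} (hτ : τ.IsHermitian) :
    frob τ ^ 2 = ∑ i, hτ.eigenvalues i ^ 2 := by
  rw [frob, Real.sq_sqrt (by positivity), hτ.sum_sq_apply_eq_sum_sq_eigenvalues]

lemma two_mul_max_le_sq_add_sq_div_add {a b s : ℝ} (hs : 0 < s) :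
    2 * max a b ≤ (a ^ 2 + b ^ 2) / s + s := by
  have key (x y : ℝ) : 2 * x ≤ (x ^ 2 + y ^ 2) / s + s := by
    rw [div_add' _ _ _ hs.ne', le_div_iff₀ hs]
    nlinarith [sq_nonneg (x - s), sq_nonneg y]
  rcases max_choice a b with h | h <;> rw [h]
  · exact key a b
  · simpa only [add_comm (a ^ 2)] using key b a

lemma two_mul_max_le_two_mul_add_sub_mul_div {a b s : ℝ} (ha : 0 ≤ a) (hb : 0 ≤ b)
    (hab : a + b ≤ s) : 2 * max a b ≤ 2 * (a + b - a * b / s) := by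
  have hs : 0 ≤ s := by linarith
  suffices a * b / s ≤ min a b by linarith [max_add_min a b]
  rcases le_total a b with h | h
  · rw [min_eq_left h]
    exact div_le_of_le_mul₀ hs ha (by nlinarith)
  · rw [min_eq_right h]
    exact div_le_of_le_mul₀ hs hb (by nlinarith)

/-- for `n = 2`, every `λ > 0` and every symmetric `τ`, `H⁽²⁾(τ) ≤ h_λ(τ)`. -/
theorem H2_le_hlam (lam : ℝ) (hlam_pos : 0 < lam) (τ : Matrix (Fin 2) (Fin 2) ℝ)
    (hτ : τ.IsHermitian) : H2 τ ≤ hlam lam τ := by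
  have hs : 0 < Real.sqrt lam := Real.sqrt_pos.mpr hlam_pos
  have hdet : |τ.det| = |hτ.eigenvalues 0| * |hτ.eigenvalues 1| := by
    simp [hτ.det_eq_prod_eigenvalues, Fin.prod_univ_two, abs_mul]
  have hfrob : frob τ ^ 2 = |hτ.eigenvalues 0| ^ 2 + |hτ.eigenvalues 1| ^ 2 := by
    rw [frob_sq_eq_sum_sq_eigenvalues hτ, Fin.sum_univ_two, sq_abs, sq_abs]
  rw [H2, hlam, rho2, dif_pos hτ, hdet, hfrob]
  split_ifs with h
  · exact two_mul_max_le_sq_add_sq_div_add hs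
  · exact two_mul_max_le_two_mul_add_sub_mul_div (abs_nonneg _) (abs_nonneg _) (not_le.1 h).le
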